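/- Let λ ≥ μ + 1 with μ > 0, and define the odd orthonormal generalized Gegenbauer polynomial C̃_{2n+1}^{(λ,μ)}(t) = ã_{2n+1}^{(λ,μ)} t P_n^{(λ-1/2, μ+1/2)}(2t² - 1) with ã_{2n+1}^{(λ,μ)} = ((2n+λ+μ+1) Γ(n+1) Γ(n+λ+μ+1) / (Γ(n+λ+1/2) Γ(n+μ+3/2)))^{1/2}. Then max_{t ∈ [-1,1]} |C̃_{2n+1}^{(λ,μ)}(t)| ≍ n^λ as n → ∞. -/

import Mathlib

/-!
Write `a = λ - 1/2`, `b = μ + 1/2`, so `a ≥ b` and the polynomial is `ã t P_n^{(a,b)}(2t² - 1)`.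
For `a ≥ b` the maximum of `|P_n^{(a,b)}|` on `[-1, 1]` is `P_n^{(a,b)}(1) = (a+1)_n / n!` (Szegő):
Sonine's function `n(n+a+b+1) P² + (1 - x²) P'²` is monotone on each side of a single critical
point, so it is largest at `x = ±1`, and Chu–Vandermonde gives
`|P_n(-1)| = (b+1)_n / n! ≤ (a+1)_n / n!`. The maximum is thus `ã (a+1)_n / n!`, and
`Γ(x + d) / Γ(x) ≍ x^d`, from the log-convexity of `Γ`, gives `ã ≍ n^{1/2}` and
`(a+1)_n / n! ≍ n^a`.
-/

open Real Set

/-- Jacobi polynomial `P_n^{(a,b)}` in the standard normalization. -/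
noncomputable def jacobiP (a b : ℝ) (n : ℕ) (x : ℝ) : ℝ :=
  (Nat.factorial n : ℝ)⁻¹ *
    ∑ k ∈ Finset.range (n + 1),
      (Nat.choose n k : ℝ) * (ascPochhammer ℝ k).eval ((n : ℝ) + a + b + 1) *
        (ascPochhammer ℝ (n - k)).eval (a + (k : ℝ) + 1) * ((x - 1) / 2) ^ k

/-- Pochhammer symbol `(q)_n` for real `q`. -/
noncomputable def poch (q : ℝ) (n : ℕ) : ℝ := (ascPochhammer ℝ n).eval q

/-- Normalization constant for odd orthonormal generalized Gegenbauer polynomials. -/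
noncomputable def atilde2n1 (l m : ℝ) (n : ℕ) : ℝ :=
  (((2 * n + l + m + 1) * Real.Gamma (n + 1) * Real.Gamma (n + l + m + 1)) /
    (Real.Gamma (n + l + 1 / 2) * Real.Gamma (n + m + 3 / 2))) ^ ((1 : ℝ) / 2)

open Polynomial Filter Asymptotics
open scoped Nat

lemma poch_succ (q : ℝ) (n : ℕ) : poch q (n + 1) = poch q n * (q + n) :=
  ascPochhammer_succ_eval n q

lemma poch_succ_left (q : ℝ) (n : ℕ) : poch q (n + 1) = q * poch (q + 1) n := by
  simp [poch, ascPochhammer_succ_left]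

lemma poch_pos {q : ℝ} (hq : 0 < q) (n : ℕ) : 0 < poch q n := ascPochhammer_pos n q hq

lemma poch_le_poch {q r : ℝ} (hq : 0 < q) (hqr : q ≤ r) (n : ℕ) : poch q n ≤ poch r n := by
  induction n with
  | zero => simp [poch]
  | succ n ih =>
    rw [poch_succ, poch_succ]
    have := poch_pos (hq.trans_le hqr) n
    gcongr

lemma Gamma_mul_poch {q : ℝ} (hq : 0 < q) (n : ℕ) : Gamma q * poch q n = Gamma (q + n) := by
  induction n with
  | zero => simp [poch]
  | succ n ih =>
    rw [poch_succ, ← mul_assoc, ih, Nat.cast_succ, ← add_assoc,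
      Gamma_add_one (by positivity), mul_comm]

lemma poch_neg (q : ℝ) (n : ℕ) : poch (-(q + n) + 1) n = (-1) ^ n * poch q n := by
  rw [poch, show -(q + n) + 1 = -(q + n - 1) by ring, ascPochhammer_eval_neg_eq_descPochhammer,
    descPochhammer_eval_eq_ascPochhammer, poch]
  ring_nf

/-- Chu–Vandermonde. -/
lemma poch_add_eq_sum (r s : ℝ) (n : ℕ) :
    poch (r + s - n + 1) n = ∑ k ∈ Finset.range (n + 1),
      n.choose k * (poch (r - k + 1) k * poch (s - (n - k : ℕ) + 1) (n - k)) := by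
  have h := Ring.descPochhammer_smeval_add (R := ℝ) n (Commute.all r s)
  simp only [descPochhammer_smeval_eq_ascPochhammer, ascPochhammer_smeval_eq_eval] at h
  exact h.trans (Finset.Nat.sum_antidiagonal_eq_sum_range_succ
    (fun i j => (n.choose i : ℝ) * (poch (r - i + 1) i * poch (s - j + 1) j)) n)

lemma Gamma_add_le_rpow_mul_Gamma {x s : ℝ} (hx : 0 < x) (hs₀ : 0 ≤ s) (hs₁ : s ≤ 1) :
    Gamma (x + s) ≤ x ^ s * Gamma x := by
  have hΓ := Gamma_pos_of_pos hx
  have h := convexOn_log_Gamma.2 (mem_Ioi.2 hx) (mem_Ioi.2 (by linarith : 0 < x + 1))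
    (sub_nonneg.2 hs₁) hs₀ (by ring)
  simp only [smul_eq_mul, Function.comp, show (1 - s) * x + s * (x + 1) = x + s by ring,
    Gamma_add_one hx.ne', log_mul hx.ne' hΓ.ne'] at h
  rw [← log_le_log_iff (Gamma_pos_of_pos (by linarith)) (by positivity),
    log_mul (by positivity) hΓ.ne', log_rpow hx]
  linarith

lemma rpow_mul_Gamma_le_two_mul_Gamma_add {x s : ℝ} (hx : 1 ≤ x) (hs₀ : 0 ≤ s) (hs₁ : s ≤ 1) :
    x ^ s * Gamma x ≤ 2 * Gamma (x + s) := by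
  have hx₀ : 0 < x := by linarith
  have hxs : 0 < x + s := by linarith
  -- Wendel: `x Γ(x) ≤ (x + s)^(1 - s) Γ(x + s)` is the upper bound at `x + s`, exponent `1 - s`.
  have h := Gamma_add_le_rpow_mul_Gamma hxs (sub_nonneg.2 hs₁) (by linarith)
  rw [show x + s + (1 - s) = x + 1 by ring, Gamma_add_one hx₀.ne'] at h
  have h₂ : (x + s) ^ (1 - s) ≤ 2 * x ^ (1 - s) :=
    calc (x + s) ^ (1 - s) ≤ (2 * x) ^ (1 - s) := by gcongr; linarith
      _ = 2 ^ (1 - s) * x ^ (1 - s) := mul_rpow (by norm_num) hx₀.le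
      _ ≤ 2 ^ (1 : ℝ) * x ^ (1 - s) := by gcongr <;> norm_num; linarith
      _ = 2 * x ^ (1 - s) := by rw [rpow_one]
  have hsplit : x = x ^ s * x ^ (1 - s) := by rw [← rpow_add hx₀]; simp
  have hpos : 0 < x ^ (1 - s) := by positivity
  nlinarith [Gamma_pos_of_pos hx₀, Gamma_pos_of_pos hxs, rpow_pos_of_pos hx₀ s]

lemma isTheta_Gamma_add_div_Gamma_of_le_one {s : ℝ} (hs₀ : 0 ≤ s) (hs₁ : s ≤ 1) :
    (fun x => Gamma (x + s) / Gamma x) =Θ[atTop] fun x => x ^ s := by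
  refine ⟨.of_bound 1 ?_, .of_bound 2 ?_⟩ <;> filter_upwards [eventually_ge_atTop 1] with x hx
  all_goals
    have hx₀ : 0 < x := by linarith
    have hΓ := Gamma_pos_of_pos hx₀
    rw [norm_of_nonneg (by positivity), norm_of_nonneg (by positivity)]
  · rw [one_mul, div_le_iff₀ hΓ]
    exact Gamma_add_le_rpow_mul_Gamma hx₀ hs₀ hs₁
  · rw [mul_div_assoc', le_div_iff₀ hΓ]
    exact rpow_mul_Gamma_le_two_mul_Gamma_add hx hs₀ hs₁

lemma isTheta_add_const_id (c : ℝ) : (fun x : ℝ => x + c) =Θ[atTop] fun x => x :=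
  (IsEquivalent.refl.add_const_of_norm_tendsto_atTop tendsto_norm_atTop_atTop).isTheta

lemma isTheta_Gamma_add_div_Gamma {d : ℝ} (hd : 0 ≤ d) :
    (fun x => Gamma (x + d) / Gamma x) =Θ[atTop] fun x => x ^ d := by
  -- Peel off `⌊d⌋₊` factors `Γ(y + 1) = y Γ(y)` down to an exponent in `[0, 1)`.
  set s := d - ⌊d⌋₊
  suffices h : ∀ k : ℕ, (fun x => Gamma (x + (s + k)) / Gamma x) =Θ[atTop]
      fun x => x ^ (s + k) by
    simpa [s] using h ⌊d⌋₊
  intro k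
  induction k with
  | zero =>
    simpa using isTheta_Gamma_add_div_Gamma_of_le_one (sub_nonneg.2 (Nat.floor_le hd))
      (by linarith [Nat.lt_floor_add_one d])
  | succ k ih =>
    have he : 0 ≤ s + k := by linarith [Nat.floor_le hd, k.cast_nonneg (α := ℝ)]
    refine EventuallyEq.trans_isTheta ?_
      ((IsTheta.mul (isTheta_add_const_id (s + k)) ih).trans_eventuallyEq ?_)
    all_goals filter_upwards [eventually_gt_atTop 0] with x hx
    · rw [Nat.cast_succ, ← add_assoc s, ← add_assoc x, Gamma_add_one (by positivity),
        mul_div_assoc]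
    · rw [Nat.cast_succ, ← add_assoc, rpow_add_one hx.ne', mul_comm]

lemma isTheta_natCast_add_const (c : ℝ) :
    (fun n : ℕ => (n : ℝ) + c) =Θ[atTop] fun n => (n : ℝ) :=
  ⟨(isTheta_add_const_id c).1.comp_tendsto tendsto_natCast_atTop_atTop,
    (isTheta_add_const_id c).2.comp_tendsto tendsto_natCast_atTop_atTop⟩

lemma isTheta_Gamma_natCast_add_div_Gamma (c : ℝ) {d : ℝ} (hd : 0 ≤ d) :
    (fun n : ℕ => Gamma (n + c + d) / Gamma (n + c)) =Θ[atTop] fun n => (n : ℝ) ^ d := by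
  have hc : Tendsto (fun n : ℕ => (n : ℝ) + c) atTop atTop :=
    tendsto_atTop_add_const_right _ c tendsto_natCast_atTop_atTop
  refine IsTheta.trans ⟨(isTheta_Gamma_add_div_Gamma hd).1.comp_tendsto hc,
    (isTheta_Gamma_add_div_Gamma hd).2.comp_tendsto hc⟩
    ((isTheta_natCast_add_const c).rpow (hc.eventually (eventually_ge_atTop 0))
      (Eventually.of_forall fun n => n.cast_nonneg))

section JacobiPolynomial

variable (a b : ℝ) (n : ℕ)

noncomputable def jacobiCoeff (k : ℕ) : ℝ :=
  (n ! : ℝ)⁻¹ * n.choose k * poch (n + a + b + 1) k * poch (a + k + 1) (n - k)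

/-- `P_n^{(a,b)}` as a polynomial in `w = (x - 1) / 2`. -/
noncomputable def jacobiPolyW : ℝ[X] :=
  ∑ k ∈ Finset.range (n + 1), C (jacobiCoeff a b n k) * X ^ k

variable {a b n}

lemma jacobiCoeff_eq_zero_of_lt {k : ℕ} (h : n < k) : jacobiCoeff a b n k = 0 := by
  simp [jacobiCoeff, Nat.choose_eq_zero_of_lt h]

variable (a b n)

lemma jacobiCoeff_succ (k : ℕ) :
    (k + 1) * (a + k + 1) * jacobiCoeff a b n (k + 1) =
      (n - k) * (n + k + a + b + 1) * jacobiCoeff a b n k := by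
  rcases lt_trichotomy k n with hk | rfl | hk
  · have hchoose : (n.choose (k + 1) : ℝ) * (k + 1) = n.choose k * (n - k) := by
      rw [← Nat.cast_sub hk.le]
      exact_mod_cast Nat.choose_succ_right_eq n k
    have hpoch : poch (a + k + 1) (n - k) =
        (a + k + 1) * poch (a + (k + 1 : ℕ) + 1) (n - (k + 1)) := by
      rw [show n - k = n - (k + 1) + 1 by omega, poch_succ_left]
      push_cast; ring_nf
    rw [jacobiCoeff, jacobiCoeff, hpoch, poch_succ]
    linear_combination (a + k + 1) * (n + a + b + 1 + k) * poch (n + a + b + 1) k *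
      poch (a + (k + 1 : ℕ) + 1) (n - (k + 1)) * (n ! : ℝ)⁻¹ * hchoose
  · simp [jacobiCoeff_eq_zero_of_lt (Nat.lt_succ_self k)]
  · simp [jacobiCoeff_eq_zero_of_lt hk, jacobiCoeff_eq_zero_of_lt (hk.trans (Nat.lt_succ_self k))]

lemma coeff_jacobiPolyW (k : ℕ) : (jacobiPolyW a b n).coeff k = jacobiCoeff a b n k := by
  simp only [jacobiPolyW, finsetSum_coeff, coeff_C_mul_X_pow, Finset.sum_ite_eq,
    Finset.mem_range]
  split_ifs with h
  · rfl
  · exact (jacobiCoeff_eq_zero_of_lt (by omega)).symm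

lemma jacobiP_eq_eval_jacobiPolyW (x : ℝ) :
    jacobiP a b n x = (jacobiPolyW a b n).eval ((x - 1) / 2) := by
  simp only [jacobiP, jacobiPolyW, eval_finsetSum, eval_mul, eval_C, eval_pow, eval_X,
    Finset.mul_sum, jacobiCoeff, poch]
  refine Finset.sum_congr rfl fun k _ => by ring

lemma jacobiPolyW_ode :
    X * (1 + X) * derivative (derivative (jacobiPolyW a b n)) +
        (C (a + 1) + C (a + b + 2) * X) * derivative (jacobiPolyW a b n) =
      C (n * (n + a + b + 1) : ℝ) * jacobiPolyW a b n := by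
  ext k
  have h := jacobiCoeff_succ a b n k
  rcases k with _ | _ | k <;>
    simp only [mul_add, add_mul, mul_one, mul_assoc, coeff_add, coeff_X_mul, coeff_C_mul,
      mul_coeff_zero, coeff_X_zero, coeff_C_zero, zero_mul, coeff_derivative, coeff_jacobiPolyW] <;>
    push_cast at h ⊢ <;>
    linear_combination h

lemma eval_zero_jacobiPolyW : (jacobiPolyW a b n).eval 0 = (n ! : ℝ)⁻¹ * poch (a + 1) n := by
  simp [← coeff_zero_eq_eval_zero, coeff_jacobiPolyW, jacobiCoeff, poch]

lemma eval_neg_one_jacobiPolyW :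
    (jacobiPolyW a b n).eval (-1) = (n ! : ℝ)⁻¹ * ((-1) ^ n * poch (b + 1) n) := by
  set N : ℝ := n + a + b + 1
  have hterm : ∀ k ∈ Finset.range (n + 1), (C (jacobiCoeff a b n k) * X ^ k).eval (-1) =
      (n ! : ℝ)⁻¹ *
        (n.choose k * (poch (-N - k + 1) k * poch (a + n - (n - k : ℕ) + 1) (n - k))) := by
    intro k hk
    rw [show -N - k + 1 = -(N + k) + 1 by ring, poch_neg,
      Nat.cast_sub (Nat.lt_succ_iff.1 (Finset.mem_range.1 hk)),
      show a + n - (n - k) + 1 = a + k + 1 by ring]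
    simp only [eval_mul, eval_C, eval_pow, eval_X, jacobiCoeff, N]
    ring
  rw [jacobiPolyW, eval_finsetSum, Finset.sum_congr rfl hterm, ← Finset.mul_sum,
    ← poch_add_eq_sum, show -N + (a + n) - n + 1 = -(b + 1 + n) + 1 by ring, poch_neg]

lemma jacobiP_one : jacobiP a b n 1 = (n ! : ℝ)⁻¹ * poch (a + 1) n := by
  rw [jacobiP_eq_eval_jacobiPolyW, sub_self, zero_div, eval_zero_jacobiPolyW]

end JacobiPolynomial

lemma le_max_of_hasDerivAt_nonpos_nonneg {f f' : ℝ → ℝ} {u v x₀ : ℝ}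
    (hf : ∀ x, HasDerivAt f (f' x) x) (hleft : ∀ x ∈ Ioo u x₀, f' x ≤ 0)
    (hright : ∀ x ∈ Ioo x₀ v, 0 ≤ f' x) {x : ℝ} (hx : x ∈ Icc u v) :
    f x ≤ max (f u) (f v) := by
  have hcont : Continuous f := continuous_iff_continuousAt.2 fun x => (hf x).continuousAt
  have hdiff : ∀ s : Set ℝ, DifferentiableOn ℝ f s := fun s x _ =>
    (hf x).differentiableAt.differentiableWithinAt
  rcases le_total x x₀ with h | h
  · refine le_max_of_le_left (antitoneOn_of_deriv_nonpos (convex_Icc u x) hcont.continuousOn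
      (hdiff _) (fun y hy => ?_) ⟨le_rfl, hx.1⟩ ⟨hx.1, le_rfl⟩ hx.1)
    rw [interior_Icc] at hy
    exact (hf y).deriv ▸ hleft y ⟨hy.1, hy.2.trans_le h⟩
  · refine le_max_of_le_right (monotoneOn_of_deriv_nonneg (convex_Icc x v) hcont.continuousOn
      (hdiff _) (fun y hy => ?_) ⟨le_rfl, hx.2⟩ ⟨hx.2, le_rfl⟩ hx.2)
    rw [interior_Icc] at hy
    exact (hf y).deriv ▸ hright y ⟨h.trans_lt hy.1, hy.2⟩

/-- Sonine's argument: `c Q² - w (1 + w) Q'²` has derivative `Q'² ((2α + 1) + 2 (α + β + 1) w)`,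
so it is maximal on `[-1, 0]` at an endpoint, where it equals `c Q²`. -/
lemma sq_eval_le_max_of_jacobi_ode {Q : ℝ[X]} {α β c : ℝ} (hc : 0 < c) (hαβ : 0 < α + β + 1)
    (hode : X * (1 + X) * derivative (derivative Q) +
      (C (α + 1) + C (α + β + 2) * X) * derivative Q = C c * Q)
    {w : ℝ} (hw : w ∈ Icc (-1) 0) :
    Q.eval w ^ 2 ≤ max (Q.eval (-1) ^ 2) (Q.eval 0 ^ 2) := by
  set F : ℝ → ℝ := fun w => c * Q.eval w ^ 2 - w * (1 + w) * (derivative Q).eval w ^ 2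
  have hF : ∀ w, HasDerivAt F
      ((derivative Q).eval w ^ 2 * ((2 * α + 1) + 2 * (α + β + 1) * w)) w := by
    intro w
    have hQ := congrArg (eval w) hode
    simp only [eval_add, eval_mul, eval_X, eval_one, eval_C] at hQ
    have h := (((Q.hasDerivAt w).fun_pow 2).const_mul c).fun_sub
      (((hasDerivAt_id' w).fun_mul ((hasDerivAt_id' w).const_add 1)).fun_mul
        ((Q.derivative.hasDerivAt w).fun_pow 2))
    exact h.congr_deriv (by push_cast; linear_combination (-2 * eval w (derivative Q)) * hQ)
  have hx₀ : 0 < 2 * (α + β + 1) := by linarith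
  have hmax := le_max_of_hasDerivAt_nonpos_nonneg hF (x₀ := -(2 * α + 1) / (2 * (α + β + 1)))
    (fun x hx => mul_nonpos_of_nonneg_of_nonpos (sq_nonneg _) (by
      have := (lt_div_iff₀ hx₀).1 hx.2; linarith))
    (fun x hx => mul_nonneg (sq_nonneg _) (by
      have := (div_lt_iff₀ hx₀).1 hx.1; linarith)) hw
  have hFw : c * Q.eval w ^ 2 ≤ F w := by
    have : 0 ≤ -(w * (1 + w)) := by nlinarith [hw.1, hw.2]
    simp only [F]; nlinarith [sq_nonneg ((derivative Q).eval w)]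
  rw [show F (-1) = c * Q.eval (-1) ^ 2 by norm_num [F], show F 0 = c * Q.eval 0 ^ 2 by simp [F],
    ← mul_max_of_nonneg _ _ hc.le] at hmax
  exact le_of_mul_le_mul_left (hFw.trans hmax) hc

section JacobiBound

variable {a b : ℝ}

lemma abs_jacobiP_le_jacobiP_one (hb : -1 < b) (hab : b ≤ a) (habp : 0 < a + b + 1) (n : ℕ)
    {x : ℝ} (hx : x ∈ Icc (-1) 1) : |jacobiP a b n x| ≤ jacobiP a b n 1 := by
  rcases n.eq_zero_or_pos with rfl | hn
  · simp [jacobiP]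
  have hc : 0 < (n * (n + a + b + 1) : ℝ) := by
    have : (1 : ℝ) ≤ n := by exact_mod_cast hn
    nlinarith
  have hw : (x - 1) / 2 ∈ Icc (-1) 0 := ⟨by linarith [hx.1], by linarith [hx.2]⟩
  have hsq := sq_eval_le_max_of_jacobi_ode hc habp (jacobiPolyW_ode a b n) hw
  have hends : (jacobiPolyW a b n).eval (-1) ^ 2 ≤ (jacobiPolyW a b n).eval 0 ^ 2 := by
    rw [eval_neg_one_jacobiPolyW, eval_zero_jacobiPolyW, mul_pow, mul_pow, mul_pow, ← pow_mul,
      pow_mul', neg_one_sq, one_pow, one_mul]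
    have := poch_pos (by linarith : 0 < b + 1) n
    gcongr
    exact poch_le_poch (by linarith) (by linarith) n
  rw [max_eq_right hends] at hsq
  rw [jacobiP_eq_eval_jacobiPolyW, jacobiP_eq_eval_jacobiPolyW, sub_self, zero_div]
  have h0 : 0 ≤ (jacobiPolyW a b n).eval 0 := by
    rw [eval_zero_jacobiPolyW]
    have := poch_pos (by linarith : 0 < a + 1) n
    positivity
  simpa [abs_of_nonneg h0] using sq_le_sq.1 hsq

lemma sSup_abs_mul_jacobiP_eq (hb : -1 < b) (hab : b ≤ a) (habp : 0 < a + b + 1) (c : ℝ)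
    (n : ℕ) : sSup ((fun t : ℝ => |c * t * jacobiP a b n (2 * t ^ 2 - 1)|) '' Icc (-1) 1) =
      |c| * jacobiP a b n 1 := by
  have hP : ∀ t ∈ Icc (-1 : ℝ) 1, |jacobiP a b n (2 * t ^ 2 - 1)| ≤ jacobiP a b n 1 := by
    intro t ht
    have : t ^ 2 ≤ 1 := by nlinarith [ht.1, ht.2]
    exact abs_jacobiP_le_jacobiP_one hb hab habp n ⟨by nlinarith, by nlinarith⟩
  refine IsGreatest.csSup_eq ⟨⟨1, ⟨by norm_num, le_rfl⟩, ?_⟩, ?_⟩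
  · have := (abs_nonneg _).trans (hP 1 ⟨by norm_num, le_rfl⟩)
    norm_num [abs_mul, abs_of_nonneg this]
  · rintro _ ⟨t, ht, rfl⟩
    dsimp only
    rw [abs_mul, abs_mul]
    calc |c| * |t| * |jacobiP a b n (2 * t ^ 2 - 1)| ≤ |c| * 1 * jacobiP a b n 1 := by
          gcongr
          · exact abs_le.2 ht
          · exact hP t ht
      _ = |c| * jacobiP a b n 1 := by ring

end JacobiBound

lemma isTheta_jacobiP_one {a : ℝ} (b : ℝ) (ha : 0 ≤ a) :
    (fun n => jacobiP a b n 1) =Θ[atTop] fun n => (n : ℝ) ^ a := by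
  have hΓ := Gamma_pos_of_pos (by linarith : 0 < a + 1)
  refine EventuallyEq.trans_isTheta (Eventually.of_forall fun n => ?_)
    ((isTheta_const_mul_left (inv_ne_zero hΓ.ne')).2 (isTheta_Gamma_natCast_add_div_Gamma 1 ha))
  have hpoch := Gamma_mul_poch (by linarith : 0 < a + 1) n
  dsimp only
  rw [jacobiP_one, ← Gamma_nat_eq_factorial, show (n : ℝ) + 1 + a = a + 1 + n by ring, ← hpoch]
  field_simp

lemma isTheta_atilde2n1 {l : ℝ} (m : ℝ) (hl : 1 / 2 ≤ l) :
    (fun n => atilde2n1 l m n) =Θ[atTop] fun n => (n : ℝ) ^ (1 / 2 : ℝ) := by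
  have ha : 0 ≤ l - 1 / 2 := by linarith
  have hlin : (fun n : ℕ => 2 * (n : ℝ) + l + m + 1) =Θ[atTop] fun n => (n : ℝ) :=
    EventuallyEq.trans_isTheta (Eventually.of_forall fun n => by ring)
      ((isTheta_const_mul_left two_ne_zero).2 (isTheta_natCast_add_const ((l + m + 1) / 2)))
  have hE := (hlin.mul (isTheta_Gamma_natCast_add_div_Gamma (m + 3 / 2) ha)).div
    (isTheta_Gamma_natCast_add_div_Gamma 1 ha)
  have hlarge : ∀ᶠ n : ℕ in atTop, |m| + |l| + 2 < (n : ℝ) :=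
    tendsto_natCast_atTop_atTop.eventually_gt_atTop _
  refine IsTheta.rpow ?_ (Eventually.of_forall fun n => n.cast_nonneg) <|
    EventuallyEq.trans_isTheta ?_ (hE.trans_eventuallyEq ?_)
  all_goals filter_upwards [hlarge] with n hn
  · have := neg_abs_le m
    have := neg_abs_le l
    have := abs_nonneg m
    have := abs_nonneg l
    have : 0 < Gamma (n + 1) := Gamma_pos_of_pos (by linarith)
    have : 0 < Gamma (n + l + m + 1) := Gamma_pos_of_pos (by linarith)
    have : 0 < Gamma (n + l + 1 / 2) := Gamma_pos_of_pos (by linarith)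
    have : 0 < Gamma (n + m + 3 / 2) := Gamma_pos_of_pos (by linarith)
    have : 0 < 2 * (n : ℝ) + l + m + 1 := by linarith
    rw [Pi.zero_apply]
    positivity
  · rw [show (n : ℝ) + (m + 3 / 2) + (l - 1 / 2) = n + l + m + 1 by ring,
      show (n : ℝ) + 1 + (l - 1 / 2) = n + l + 1 / 2 by ring,
      show (n : ℝ) + (m + 3 / 2) = n + m + 3 / 2 by ring, div_div_eq_mul_div]
    ring
  · have : 0 < (n : ℝ) := by linarith [abs_nonneg m, abs_nonneg l]
    have : 0 < (n : ℝ) ^ (l - 1 / 2) := by positivity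
    field_simp

theorem Asymptotics.IsTheta.exists_pos_bounds {f g : ℕ → ℝ} (h : f =Θ[atTop] g) (hf : ∀ n, 0 ≤ f n)
    (hg : ∀ n, 0 ≤ g n) : ∃ C₁ C₂ : ℝ, 0 < C₁ ∧ 0 < C₂ ∧ ∃ n₀ : ℕ, ∀ n : ℕ, n₀ ≤ n →
      C₁ * g n ≤ f n ∧ f n ≤ C₂ * g n := by
  obtain ⟨c₂, hc₂, hupper⟩ := h.1.exists_pos
  obtain ⟨c₁, hc₁, hlower⟩ := h.2.exists_pos
  obtain ⟨n₀, hn₀⟩ := eventually_atTop.1 (hupper.bound.and hlower.bound)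
  refine ⟨c₁⁻¹, c₂, inv_pos.2 hc₁, hc₂, n₀, fun n hn => ?_⟩
  obtain ⟨h₂, h₁⟩ := hn₀ n hn
  rw [norm_of_nonneg (hf n), norm_of_nonneg (hg n)] at h₁ h₂
  exact ⟨by rw [inv_mul_le_iff₀ hc₁]; exact h₁, h₂⟩

theorem odd_gegenbauer_max_asymp_large_lambda (l m : ℝ) (hm : 0 < m) (hlm : m + 1 ≤ l) :
    ∃ C₁ C₂ : ℝ, 0 < C₁ ∧ 0 < C₂ ∧ ∃ n₀ : ℕ, ∀ n : ℕ, n₀ ≤ n →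
      C₁ * (n : ℝ) ^ l ≤
        sSup ((fun t : ℝ =>
            |atilde2n1 l m n * t * jacobiP (l - 1 / 2) (m + 1 / 2) n (2 * t ^ 2 - 1)|) ''
          Set.Icc (-1) 1) ∧
      sSup ((fun t : ℝ =>
            |atilde2n1 l m n * t * jacobiP (l - 1 / 2) (m + 1 / 2) n (2 * t ^ 2 - 1)|) ''
          Set.Icc (-1) 1) ≤ C₂ * (n : ℝ) ^ l := by
  have hb : -1 < m + 1 / 2 := by linarith
  have hab : m + 1 / 2 ≤ l - 1 / 2 := by linarith
  have habp : 0 < l - 1 / 2 + (m + 1 / 2) + 1 := by linarith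
  simp only [sSup_abs_mul_jacobiP_eq hb hab habp]
  have hpow : ∀ n : ℕ, (n : ℝ) ^ (1 / 2 : ℝ) * (n : ℝ) ^ (l - 1 / 2) = (n : ℝ) ^ l := fun n => by
    rw [← rpow_add' n.cast_nonneg (by linarith), add_sub_cancel]
  have hΘ : (fun n : ℕ => |atilde2n1 l m n| * jacobiP (l - 1 / 2) (m + 1 / 2) n 1) =Θ[atTop]
      fun n => (n : ℝ) ^ l :=
    ((isTheta_norm_left.2 (isTheta_atilde2n1 m (by linarith))).mul
      (isTheta_jacobiP_one (m + 1 / 2) (by linarith))).trans_eventuallyEq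
        (Eventually.of_forall hpow)
  refine hΘ.exists_pos_bounds (fun n => ?_) (fun n => by positivity)
  exact mul_nonneg (abs_nonneg _) ((abs_nonneg _).trans
    (abs_jacobiP_le_jacobiP_one hb hab habp n ⟨by norm_num, le_rfl⟩))
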